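/- arXiv:2210.00862 — 3 statements merged into one kernel-verified Lean document; each statement's English description precedes it below -/
import Mathlib

section
/- Let s be a square root on an MV-algebra M. For every x ∈ M, s(x')' ⊕ s(x')' = x, and consequently s(x')' ≤ x ≤ s(x). -/
class MVAlg (M : Type*) where
  add : M → M → M
  compl : M → M
  zero : M
  one : M
  add_comm : ∀ x y, add x y = add y x
  add_assoc : ∀ x y z, add (add x y) z = add x (add y z)
  add_zero : ∀ x, add x zero = x
  compl_compl : ∀ x, compl (compl x) = x
  add_one : ∀ x, add x one = one
  chang : ∀ x y, add x (compl (add x (compl y))) = add y (compl (add y (compl x)))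
  compl_zero : compl zero = one

namespace MVAlg

variable {M : Type*} [MVAlg M]

/-- x ⊙ y := (x' ⊕ y')' -/
def odot (x y : M) : M := compl (add (compl x) (compl y))

/-- x ≤ y iff x' ⊕ y = 1 -/
def le (x y : M) : Prop := add (compl x) y = one

/-- x ∧ y := x ⊙ (x' ⊕ y) -/
def inf (x y : M) : M := odot x (add (compl x) y)

/-- x ∨ y := (x ⊙ y') ⊕ y -/
def sup (x y : M) : M := add (odot x (compl y)) y

/-- x ⊖ y := x ⊙ y' -/
def sub (x y : M) : M := odot x (compl y)

/-- A square root on an MV-algebra. -/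
def IsSquareRoot (s : M → M) : Prop :=
  (∀ x : M, odot (s x) (s x) = x) ∧ ∀ x y : M, le (odot y y) x → le y (s x)

lemma compl_one : (compl (one : M)) = zero := by
  rw [← compl_zero, compl_compl]

lemma em (x : M) : add x (compl x) = one := by
  have h := chang x (one : M)
  rw [compl_one, add_zero, add_comm (one : M), add_one] at h
  exact h

end MVAlg

theorem square_root_compl_eq {M : Type*} [MVAlg M] (s : M → M)
    (hs : MVAlg.IsSquareRoot s) (x : M) :
    MVAlg.add (MVAlg.compl (s (MVAlg.compl x))) (MVAlg.compl (s (MVAlg.compl x))) = x ∧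
    MVAlg.le (MVAlg.compl (s (MVAlg.compl x))) x ∧ MVAlg.le x (s x) := by
  obtain ⟨h1, h2⟩ := hs
  set a := MVAlg.compl (s (MVAlg.compl x)) with ha
  have key : MVAlg.add a a = x := by
    have h := h1 (MVAlg.compl x)
    unfold MVAlg.odot at h
    rw [← ha] at h
    have h' := congrArg MVAlg.compl h
    rwa [MVAlg.compl_compl, MVAlg.compl_compl] at h'
  refine ⟨key, ?_, ?_⟩
  · show MVAlg.add (MVAlg.compl a) x = MVAlg.one
    rw [← key, ← MVAlg.add_assoc, ha, MVAlg.compl_compl, MVAlg.em,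
      MVAlg.add_comm, MVAlg.add_one]
  · apply h2
    show MVAlg.add (MVAlg.compl (MVAlg.odot x x)) x = MVAlg.one
    unfold MVAlg.odot
    rw [MVAlg.compl_compl, MVAlg.add_assoc, MVAlg.add_comm (MVAlg.compl x) x,
      MVAlg.em, MVAlg.add_one]
end

section
/- Let s be a square root on an MV-algebra M. Then s preserves binary joins: s(x ∨ y) = s(x) ∨ s(y) for all x, y ∈ M. -/
namespace MVTools

open MVAlg

variable {M : Type*} [MVAlg M]

theorem mv_odot_def (x y : M) : odot x y = compl (add (compl x) (compl y)) := rfl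

theorem mv_le_def (x y : M) : le x y ↔ add (compl x) y = one := Iff.rfl

theorem mv_sup_def (x y : M) : sup x y = add (odot x (compl y)) y := rfl

theorem mv_add_left_comm (a b c : M) : add a (add b c) = add b (add a c) := by
  rw [← MVAlg.add_assoc, MVAlg.add_comm a b, MVAlg.add_assoc]

theorem mv_add_right_comm (a b c : M) : add (add a b) c = add (add a c) b := by
  rw [MVAlg.add_assoc, MVAlg.add_comm b c, MVAlg.add_assoc]

theorem mv_compl_one : compl (one : M) = zero := by
  rw [← MVAlg.compl_zero, MVAlg.compl_compl]

theorem mv_one_add (x : M) : add one x = one := by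
  rw [MVAlg.add_comm, MVAlg.add_one]

theorem mv_zero_add (x : M) : add zero x = x := by
  rw [MVAlg.add_comm, MVAlg.add_zero]

theorem mv_compl_inj {a b : M} (h : compl a = compl b) : a = b := by
  rw [← MVAlg.compl_compl a, h, MVAlg.compl_compl]

theorem mv_add_self_compl (x : M) : add x (compl x) = one := by
  have h := MVAlg.chang x (one : M)
  rw [mv_compl_one, MVAlg.add_zero] at h
  rw [h, mv_one_add]

theorem mv_compl_add_self (x : M) : add (compl x) x = one := by
  rw [MVAlg.add_comm, mv_add_self_compl]

theorem mv_odot_self_compl (x : M) : odot x (compl x) = zero := by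
  rw [mv_odot_def, MVAlg.compl_compl, mv_compl_add_self, mv_compl_one]

theorem mv_odot_one (x : M) : odot x one = x := by
  rw [mv_odot_def, mv_compl_one, MVAlg.add_zero, MVAlg.compl_compl]

theorem mv_odot_zero (x : M) : odot x zero = zero := by
  rw [mv_odot_def, MVAlg.compl_zero, MVAlg.add_one, mv_compl_one]

theorem mv_odot_comm (x y : M) : odot x y = odot y x := by
  rw [mv_odot_def, MVAlg.add_comm, mv_odot_def]

theorem mv_odot_assoc (x y z : M) :
    odot (odot x y) z = odot x (odot y z) := by
  simp only [mv_odot_def, MVAlg.compl_compl, MVAlg.add_assoc]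

theorem mv_le_refl (x : M) : le x x := mv_compl_add_self x

theorem mv_le_of_eq {x y : M} (h : x = y) : le x y := by rw [h]; exact mv_le_refl y

theorem mv_le_one (x : M) : le x one := MVAlg.add_one _

theorem mv_zero_le (x : M) : le zero x := by
  show add (MVAlg.compl (MVAlg.zero : M)) x = one
  rw [MVAlg.compl_zero, mv_one_add]

theorem mv_eq_one_of_one_le {x : M} (h : le one x) : x = one := by
  have : add (MVAlg.compl (MVAlg.one : M)) x = one := h
  rwa [mv_compl_one, mv_zero_add] at this

theorem mv_eq_zero_of_le_zero {x : M} (h : le x zero) : x = zero := by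
  have : add (compl x) zero = one := h
  rw [MVAlg.add_zero] at this
  rw [← MVAlg.compl_compl x, this, mv_compl_one]

theorem mv_le_add_left (x y : M) : le x (add y x) := by
  show add (compl x) (add y x) = one
  rw [mv_add_left_comm, mv_compl_add_self, MVAlg.add_one]

theorem mv_le_self_add (x y : M) : le x (add x y) := by
  rw [MVAlg.add_comm]; exact mv_le_add_left x y

/-- Adjunction: x ⊙ y ≤ z ↔ x ≤ y' ⊕ z -/
theorem mv_odot_le_iff (x y z : M) :
    le (odot x y) z ↔ le x (add (compl y) z) := by
  show add (compl (odot x y)) z = one ↔ add (compl x) (add (compl y) z) = one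
  rw [mv_odot_def, MVAlg.compl_compl, MVAlg.add_assoc]

theorem mv_le_iff_odot_compl (x y : M) :
    le x y ↔ odot x (compl y) = zero := by
  constructor
  · intro h
    have h' : add (compl x) y = one := h
    rw [mv_odot_def, MVAlg.compl_compl, h', mv_compl_one]
  · intro h
    have h' : compl (add (compl x) y) = zero := by
      rw [← h, mv_odot_def, MVAlg.compl_compl]
    show add (compl x) y = one
    rw [← MVAlg.compl_compl (add (compl x) y), h', MVAlg.compl_zero]

theorem mv_sup_comm (x y : M) : sup x y = sup y x := by
  rw [mv_sup_def, mv_sup_def, mv_odot_def, mv_odot_def, MVAlg.compl_compl, MVAlg.compl_compl]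
  rw [MVAlg.add_comm (compl (add (compl x) y)) y, MVAlg.add_comm (compl (add (compl y) x)) x]
  rw [MVAlg.add_comm (compl x) y, MVAlg.add_comm (compl y) x]
  exact MVAlg.chang y x

theorem mv_le_sup_right (x y : M) : le y (sup x y) := mv_le_add_left _ _

theorem mv_le_sup_left (x y : M) : le x (sup x y) := by
  rw [mv_sup_comm]; exact mv_le_sup_right y x

theorem mv_sup_of_le {x y : M} (h : le x y) : sup x y = y := by
  rw [mv_sup_def, (mv_le_iff_odot_compl x y).mp h, mv_zero_add]

theorem mv_le_antisymm {x y : M} (h1 : le x y) (h2 : le y x) : x = y := by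
  have e1 : sup y x = x := mv_sup_of_le h2
  have e2 : sup x y = y := mv_sup_of_le h1
  rw [← e2, mv_sup_comm, e1]

theorem mv_decomp_of_le {x y : M} (h : le x y) :
    y = add x (odot y (compl x)) := by
  have e : sup x y = y := mv_sup_of_le h
  rw [mv_sup_comm] at e
  conv_lhs => rw [← e]
  rw [mv_sup_def, MVAlg.add_comm]

theorem mv_add_le_add_right {u w : M} (h : le u w) (c : M) :
    le (add u c) (add w c) := by
  rw [mv_decomp_of_le h, mv_add_right_comm]
  exact mv_le_self_add _ _

theorem mv_add_le_add_left {u w : M} (h : le u w) (c : M) :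
    le (add c u) (add c w) := by
  rw [MVAlg.add_comm c u, MVAlg.add_comm c w]
  exact mv_add_le_add_right h c

theorem mv_le_trans {a b c : M} (h1 : le a b) (h2 : le b c) : le a c := by
  show add (compl a) c = one
  rw [mv_decomp_of_le h2, mv_decomp_of_le h1]
  rw [← MVAlg.add_assoc, ← MVAlg.add_assoc, mv_compl_add_self, mv_one_add, mv_one_add]

theorem mv_compl_le_compl {a b : M} (h : le a b) : le (compl b) (compl a) := by
  show add (compl (compl b)) (compl a) = one
  rw [MVAlg.compl_compl, MVAlg.add_comm]
  exact h

theorem mv_odot_le_odot_right {c d : M} (h : le c d) (w : M) :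
    le (odot w c) (odot w d) := by
  rw [mv_odot_def, mv_odot_def]
  exact mv_compl_le_compl (mv_add_le_add_left (mv_compl_le_compl h) _)

theorem mv_odot_le_odot_left {c d : M} (h : le c d) (w : M) :
    le (odot c w) (odot d w) := by
  rw [mv_odot_comm c w, mv_odot_comm d w]
  exact mv_odot_le_odot_right h w

theorem mv_odot_le_left (x y : M) : le (odot x y) x := by
  show add (compl (odot x y)) x = one
  rw [mv_odot_def, MVAlg.compl_compl, mv_add_right_comm, mv_compl_add_self, mv_one_add]

theorem mv_odot_le_right (x y : M) : le (odot x y) y := by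
  rw [mv_odot_comm]; exact mv_odot_le_left y x

theorem mv_sup_le {a b c : M} (h1 : le a c) (h2 : le b c) : le (sup a b) c := by
  have s1 : le (sup a b) (sup c b) :=
    mv_add_le_add_right (mv_odot_le_odot_left h1 (compl b)) b
  have s2 : sup c b = c := by rw [mv_sup_comm]; exact mv_sup_of_le h2
  rw [s2] at s1
  exact s1

/-- meet defined by De Morgan -/
def infm (x y : M) : M := compl (sup (compl x) (compl y))

theorem mv_compl_infm (x y : M) :
    compl (infm x y) = sup (compl x) (compl y) := by
  rw [infm, MVAlg.compl_compl]

theorem mv_compl_sup (x y : M) :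
    compl (sup x y) = infm (compl x) (compl y) := by
  simp only [infm, MVAlg.compl_compl]

theorem mv_infm_le_left (x y : M) : le (infm x y) x := by
  have h : le (compl x) (sup (compl x) (compl y)) := mv_le_sup_left _ _
  have h2 := mv_compl_le_compl h
  rw [MVAlg.compl_compl] at h2
  exact h2

theorem mv_infm_le_right (x y : M) : le (infm x y) y := by
  have h : le (compl y) (sup (compl x) (compl y)) := mv_le_sup_right _ _
  have h2 := mv_compl_le_compl h
  rw [MVAlg.compl_compl] at h2
  exact h2

theorem mv_le_infm {c x y : M} (h1 : le c x) (h2 : le c y) : le c (infm x y) := by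
  have h : le (sup (compl x) (compl y)) (compl c) :=
    mv_sup_le (mv_compl_le_compl h1) (mv_compl_le_compl h2)
  have h3 := mv_compl_le_compl h
  rw [MVAlg.compl_compl] at h3
  exact h3

theorem mv_infm_comm (x y : M) : infm x y = infm y x := by
  rw [infm, infm, mv_sup_comm]

/-- ⊕ distributes over ∧ -/
theorem mv_add_infm (x y z : M) :
    add x (infm y z) = infm (add x y) (add x z) := by
  apply mv_le_antisymm
  · exact mv_le_infm (mv_add_le_add_left (mv_infm_le_left y z) x)
      (mv_add_le_add_left (mv_infm_le_right y z) x)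
  · set w := infm (add x y) (add x z) with hw
    have hy : le (odot w (compl x)) y := by
      rw [mv_odot_le_iff, MVAlg.compl_compl]
      exact mv_infm_le_left _ _
    have hz : le (odot w (compl x)) z := by
      rw [mv_odot_le_iff, MVAlg.compl_compl]
      exact mv_infm_le_right _ _
    have h1 : le w (add (odot w (compl x)) x) := mv_le_sup_left w x
    have h2 : le (add (odot w (compl x)) x) (add (infm y z) x) :=
      mv_add_le_add_right (mv_le_infm hy hz) x
    rw [MVAlg.add_comm (infm y z) x] at h2
    exact mv_le_trans h1 h2

/-- ⊙ distributes over ∨ -/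
theorem mv_odot_sup (x y z : M) :
    odot x (sup y z) = sup (odot x y) (odot x z) := by
  rw [mv_odot_def x (sup y z), mv_compl_sup, mv_add_infm]
  rw [show infm (add (compl x) (compl y)) (add (compl x) (compl z))
      = compl (sup (compl (add (compl x) (compl y))) (compl (add (compl x) (compl z))))
      from rfl]
  rw [MVAlg.compl_compl]
  rw [mv_odot_def x y, mv_odot_def x z]

/-- H : (u ⊕ w) ⊙ c ≤ (u ⊙ c) ⊕ w -/
theorem mv_odot_add_le (u w c : M) :
    le (odot (add u w) c) (add (odot u c) w) := by
  rw [mv_odot_le_iff]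
  have h1 : le u (add (compl c) (odot u c)) := by
    rw [← mv_odot_le_iff]; exact mv_le_refl _
  have h2 := mv_add_le_add_right h1 w
  rw [MVAlg.add_assoc] at h2
  exact h2

/-- Chang-style identity: (a ⊕ b) ⊙ a' = b ⊙ (a ⊙ b)' -/
theorem mv_I2'' (a b : M) :
    odot (add a b) (compl a) = odot b (compl (odot a b)) := by
  simp only [mv_odot_def, MVAlg.compl_compl]
  apply congrArg
  rw [MVAlg.add_comm (MVAlg.compl (add a b)) a]
  have h := MVAlg.chang a (MVAlg.compl b)
  rw [MVAlg.compl_compl] at h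
  rw [h, MVAlg.add_comm (MVAlg.compl b) (MVAlg.compl a)]

/-- b = ((a ⊕ b) ⊙ a') ⊕ (a ⊙ b) -/
theorem mv_I2 (a b : M) :
    b = add (odot (add a b) (compl a)) (odot a b) := by
  have h : sup b (odot a b) = b := by
    rw [mv_sup_comm]; exact mv_sup_of_le (mv_odot_le_right a b)
  calc b = sup b (odot a b) := h.symm
    _ = add (odot b (compl (odot a b))) (odot a b) := rfl
    _ = add (odot (add a b) (compl a)) (odot a b) := by rw [← mv_I2'']

theorem mv_sup_zero (x : M) : sup x zero = x := by
  rw [mv_sup_comm]; exact mv_sup_of_le (mv_zero_le x)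

theorem mv_eq_zero_of_odot_le {r u : M} (h1 : le r u) (h2 : le r (compl u)) :
    odot r r = zero := by
  apply mv_eq_zero_of_le_zero
  have : le (odot r r) (odot u (compl u)) :=
    mv_le_trans (mv_odot_le_odot_left h1 r) (mv_odot_le_odot_right h2 u)
  rwa [mv_odot_self_compl] at this

section Boolean

variable {v : M} (hv : infm v (compl v) = zero)

include hv in
/-- for c ≤ v with v complemented, c ≤ c ⊙ v -/
theorem mv_le_odot_self_of_le {c : M} (h : le c v) : le c (odot c v) := by
  have h1 : le c (add (odot c v) (compl v)) := by
    have := (mv_odot_le_iff c v (odot c v)).mp (mv_le_refl _)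
    rwa [MVAlg.add_comm] at this
  have h2 : le c (add (odot c v) v) := mv_le_trans h (mv_le_add_left v _)
  have h3 : le c (infm (add (odot c v) (compl v)) (add (odot c v) v)) := mv_le_infm h1 h2
  rw [← mv_add_infm, mv_infm_comm, hv, MVAlg.add_zero] at h3
  exact h3

include hv in
/-- ∧ = ⊙ against a complemented element -/
theorem mv_infm_eq_odot (u : M) : infm v u = odot v u := by
  apply mv_le_antisymm
  · have h1 : le (infm v u) (odot (infm v u) v) :=
      mv_le_odot_self_of_le hv (mv_infm_le_left v u)
    have h2 : le (odot (infm v u) v) (odot u v) :=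
      mv_odot_le_odot_left (mv_infm_le_right v u) v
    rw [mv_odot_comm u v] at h2
    exact mv_le_trans h1 h2
  · exact mv_le_infm (mv_odot_le_left v u) (mv_odot_le_right v u)

include hv in
/-- v ∧ u = v ⊙ (v ⊙ u')' for complemented v -/
theorem mv_infm_eq_double_sub (u : M) :
    infm v u = odot v (compl (odot v (compl u))) := by
  have hc : compl (odot v (compl u)) = add (compl v) u := by
    simp only [mv_odot_def, MVAlg.compl_compl]
  apply mv_le_antisymm
  · have h1 : le (infm v u) (odot (infm v u) v) :=
      mv_le_odot_self_of_le hv (mv_infm_le_left v u)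
    have h2 : le (infm v u) (add (compl v) u) :=
      mv_le_trans (mv_infm_le_right v u) (mv_le_add_left _ _)
    have h3 : le (odot (infm v u) v) (odot (add (compl v) u) v) :=
      mv_odot_le_odot_left h2 v
    rw [mv_odot_comm (add (compl v) u) v, ← hc] at h3
    exact mv_le_trans h1 h3
  · apply mv_le_infm
    · exact mv_odot_le_left _ _
    · rw [hc, mv_odot_comm]
      have := mv_odot_add_le (compl v) u v
      rw [mv_odot_comm (compl v) v, mv_odot_self_compl, mv_zero_add] at this
      exact this

include hv in
/-- mv_split identity u = (v ∧ u) ⊕ (v' ∧ u) for complemented v -/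
theorem mv_split (u : M) :
    u = add (infm v u) (infm (compl v) u) := by
  set X₁ := infm v u with hX₁
  set X₂ := infm (compl v) u with hX₂
  apply mv_le_antisymm
  · -- u ≤ X₁ ⊕ X₂
    have key : le (odot u (sup (compl v) (compl u))) X₂ := by
      rw [mv_odot_sup, mv_odot_self_compl, mv_sup_zero]
      exact mv_le_infm (mv_odot_le_right u (compl v)) (mv_odot_le_left u (compl v))
    have : le u (add (compl (sup (compl v) (compl u))) X₂) := by
      rw [← mv_odot_le_iff]; exact key
    exact this
  · -- X₁ ⊕ X₂ ≤ u
    have hX1u : le X₁ u := mv_infm_le_right v u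
    have hX2u : le X₂ u := mv_infm_le_right (compl v) u
    have hz1 : odot X₁ (compl u) = zero := (mv_le_iff_odot_compl _ _).mp hX1u
    have hY1 : le (odot (add X₁ X₂) (compl u)) X₂ := by
      have := mv_odot_add_le X₁ X₂ (compl u)
      rwa [hz1, mv_zero_add] at this
    have hz2 : odot X₂ (compl u) = zero := (mv_le_iff_odot_compl _ _).mp hX2u
    have hY2 : le (odot (add X₁ X₂) (compl u)) X₁ := by
      have := mv_odot_add_le X₂ X₁ (compl u)
      rw [hz2, mv_zero_add, MVAlg.add_comm X₂ X₁] at this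
      exact this
    have hY : le (odot (add X₁ X₂) (compl u)) (infm v (compl v)) := by
      apply mv_le_infm
      · exact mv_le_trans hY2 (mv_infm_le_left v u)
      · exact mv_le_trans hY1 (mv_infm_le_left (compl v) u)
    rw [hv] at hY
    rw [mv_le_iff_odot_compl]
    exact mv_eq_zero_of_le_zero hY

include hv in
/-- ⊙ by a complemented idempotent distributes over ⊕ -/
theorem mv_odot_add_distrib (hvv : add v v = v) (c d : M) :
    odot v (add c d) = add (odot v c) (odot v d) := by
  rw [← mv_infm_eq_odot hv (add c d), ← mv_infm_eq_odot hv c, ← mv_infm_eq_odot hv d]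
  have expand : add (infm v c) (infm v d)
      = infm (infm v (add v c)) (infm (add d v) (add d c)) := by
    rw [mv_add_infm (infm v c) v d]
    rw [MVAlg.add_comm (infm v c) v, mv_add_infm v v c, hvv]
    rw [MVAlg.add_comm (infm v c) d, mv_add_infm d v c]
  rw [expand]
  apply mv_le_antisymm
  · apply mv_le_infm
    · apply mv_le_infm
      · exact mv_infm_le_left v (add c d)
      · exact mv_le_trans (mv_infm_le_left v (add c d)) (mv_le_self_add v c)
    · apply mv_le_infm
      · exact mv_le_trans (mv_infm_le_left v (add c d)) (mv_le_add_left v d)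
      · rw [MVAlg.add_comm d c]
        exact mv_infm_le_right v (add c d)
  · apply mv_le_infm
    · exact mv_le_trans
        (mv_infm_le_left (infm v (add v c)) (infm (add d v) (add d c)))
        (mv_infm_le_left v (add v c))
    · rw [MVAlg.add_comm c d]
      exact mv_le_trans
        (mv_infm_le_right (infm v (add v c)) (infm (add d v) (add d c)))
        (mv_infm_le_right (add d v) (add d c))

end Boolean

end MVTools

theorem square_root_sup {M : Type*} [MVAlg M] (s : M → M)
    (hs : MVAlg.IsSquareRoot s) (x y : M) :
    s (MVAlg.sup x y) = MVAlg.sup (s x) (s y) := by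
  open MVAlg MVTools in
  obtain ⟨hs1, hs2⟩ := hs
  set e := s zero with he
  set v := add e e with hvdef
  set t := s (sup x y) with ht
  set p := sup (s x) (s y) with hp
  -- basic sqrt facts
  have hee : odot e e = zero := hs1 zero
  have h_a_t : le (s x) t := by
    apply hs2
    rw [hs1 x]; exact mv_le_sup_left x y
  have h_b_t : le (s y) t := by
    apply hs2
    rw [hs1 y]; exact mv_le_sup_right x y
  have h_p_t : le p t := mv_sup_le h_a_t h_b_t
  have h_e_a : le e (s x) := by
    apply hs2
    rw [hee]; exact mv_zero_le x
  have h_e_p : le e p := mv_le_trans h_e_a (mv_le_sup_left _ _)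
  have htt : odot t t = sup x y := hs1 _
  have hpp : odot p p = sup x y := by
    apply mv_le_antisymm
    · have h1 : le (odot p p) (odot t t) :=
        mv_le_trans (mv_odot_le_odot_left h_p_t p) (mv_odot_le_odot_right h_p_t t)
      rwa [htt] at h1
    · apply mv_sup_le
      · have h1 : le (odot (s x) (s x)) (odot p p) :=
          mv_le_trans (mv_odot_le_odot_left (mv_le_sup_left (s x) (s y)) (s x))
            (mv_odot_le_odot_right (mv_le_sup_left (s x) (s y)) p)
        rwa [hs1 x] at h1
      · have h1 : le (odot (s y) (s y)) (odot p p) :=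
          mv_le_trans (mv_odot_le_odot_left (mv_le_sup_right (s x) (s y)) (s y))
            (mv_odot_le_odot_right (mv_le_sup_right (s x) (s y)) p)
        rwa [hs1 y] at h1
  -- v := 2e is Boolean: first, s v = v, hence v ⊙ v = v
  have hcompl_ee : odot (compl e) (compl e) = compl v := by
    simp only [mv_odot_def, MVAlg.compl_compl]
    rfl
  have hsv : s v = v := by
    apply mv_le_antisymm
    · -- s v ≤ v
      have hq : odot (odot (s v) (compl e)) (odot (s v) (compl e)) = zero := by
        have shuffle : odot (odot (s v) (compl e)) (odot (s v) (compl e))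
            = odot (odot (s v) (s v)) (odot (compl e) (compl e)) := by
          rw [mv_odot_assoc, ← mv_odot_assoc (compl e) (s v) (compl e),
            mv_odot_comm (compl e) (s v), mv_odot_assoc (s v) (compl e) (compl e),
            ← mv_odot_assoc]
        rw [shuffle, hs1 v, hcompl_ee, mv_odot_self_compl]
      have hqe : le (odot (s v) (compl e)) e := by
        apply hs2
        rw [hq]; exact mv_le_refl zero
      have := (mv_odot_le_iff (s v) (compl e) e).mp hqe
      rwa [MVAlg.compl_compl] at this
    · exact hs2 v v (mv_odot_le_left v v)
  have hvv : odot v v = v := by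
    have := hs1 v
    rwa [hsv] at this
  have hvaddv : add v v = v := by
    apply mv_le_antisymm
    · rw [mv_le_iff_odot_compl, mv_I2'', hvv, mv_odot_self_compl]
    · exact mv_le_self_add v v
  have hv'v' : odot (compl v) (compl v) = compl v := by
    simp only [mv_odot_def, MVAlg.compl_compl]
    rw [hvaddv]
  have hv13 : infm v (compl v) = zero := by
    have h1 : sup v (compl v) = one := by
      rw [mv_sup_def, MVAlg.compl_compl, hvv, mv_add_self_compl]
    rw [infm, MVAlg.compl_compl, mv_sup_comm, h1, mv_compl_one]
  have hv13' : infm (compl v) (compl (compl v)) = zero := by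
    rw [MVAlg.compl_compl, mv_infm_comm, hv13]
  have h_e_v : le e v := mv_le_self_add e e
  -- idempotency of elements under v'
  have idem : ∀ u : M, le u (compl v) → odot u u = u := by
    intro u hu
    set r := odot u (add (compl u) (compl u)) with hr
    have hr_u : le r u := mv_odot_le_left _ _
    have hr_u' : le r (compl u) := by
      have h1 := mv_odot_add_le (compl u) (compl u) u
      rw [mv_odot_comm (compl u) u, mv_odot_self_compl, mv_zero_add] at h1
      rw [hr, mv_odot_comm]
      exact h1
    have hrr : odot r r = zero := mv_eq_zero_of_odot_le hr_u hr_u'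
    have hre : le r e := by
      apply hs2
      rw [hrr]; exact mv_le_refl zero
    have hr0 : r = zero := by
      apply mv_eq_zero_of_le_zero
      rw [← hv13]
      exact mv_le_infm (mv_le_trans hre h_e_v) (mv_le_trans hr_u hu)
    apply mv_le_antisymm
    · exact mv_odot_le_left u u
    · rw [mv_le_iff_odot_compl]
      rw [show compl (odot u u) = add (compl u) (compl u) by rw [mv_odot_def, MVAlg.compl_compl]]
      rw [← hr, hr0]
  -- v'-components of t and p agree
  have hXt : odot t (compl v) = odot (sup x y) (compl v) := by
    have h1 : le (odot t (compl v)) (compl v) := mv_odot_le_right _ _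
    have h2 := idem _ h1
    have shuffle : odot (odot t (compl v)) (odot t (compl v))
        = odot (odot t t) (odot (compl v) (compl v)) := by
      rw [mv_odot_assoc, ← mv_odot_assoc (compl v) t (compl v),
        mv_odot_comm (compl v) t, mv_odot_assoc t (compl v) (compl v), ← mv_odot_assoc]
    rw [← h2, shuffle, htt, hv'v']
  have hXp : odot p (compl v) = odot (sup x y) (compl v) := by
    have h1 : le (odot p (compl v)) (compl v) := mv_odot_le_right _ _
    have h2 := idem _ h1
    have shuffle : odot (odot p (compl v)) (odot p (compl v))
        = odot (odot p p) (odot (compl v) (compl v)) := by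
      rw [mv_odot_assoc, ← mv_odot_assoc (compl v) p (compl v),
        mv_odot_comm (compl v) p, mv_odot_assoc p (compl v) (compl v), ← mv_odot_assoc]
    rw [← h2, shuffle, hpp, hv'v']
  -- the v-components: α := v ⊙ t', β := v ⊙ p'
  set α := odot v (compl t) with hα
  set β := odot v (compl p) with hβ
  have hv_e' : odot v (compl e) = e := by
    rw [hvdef, mv_I2'', hee, MVAlg.compl_zero, mv_odot_one]
  have hβe : le β e := by
    have h1 : le β (odot v (compl e)) :=
      mv_odot_le_odot_right (mv_compl_le_compl h_e_p) v
    rwa [hv_e'] at h1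
  have hαβ : le α β := mv_odot_le_odot_right (mv_compl_le_compl h_p_t) v
  have hαe : le α e := mv_le_trans hαβ hβe
  have hαα : odot α α = zero := by
    apply mv_eq_zero_of_le_zero
    have h1 : le (odot α α) (odot e e) :=
      mv_le_trans (mv_odot_le_odot_left hαe α) (mv_odot_le_odot_right hαe e)
    rwa [hee] at h1
  have hαβ0 : odot α β = zero := by
    apply mv_eq_zero_of_le_zero
    have h1 : le (odot α β) (odot e e) :=
      mv_le_trans (mv_odot_le_odot_left hαe β) (mv_odot_le_odot_right hβe e)
    rwa [hee] at h1
  have hp'p' : add (compl p) (compl p) = add (compl t) (compl t) := by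
    have h1 : compl (odot p p) = compl (odot t t) := by rw [hpp, htt]
    rw [mv_odot_def, mv_odot_def] at h1
    simp only [MVAlg.compl_compl] at h1
    exact h1
  have hββαα : add β β = add α α := by
    rw [hβ, hα, ← mv_odot_add_distrib hv13 hvaddv, ← mv_odot_add_distrib hv13 hvaddv, hp'p']
  have hβα : le β α := by
    have hI2β : β = odot (add α β) (compl α) := by
      have := mv_I2 α β
      rwa [hαβ0, MVAlg.add_zero] at this
    have hI2α : α = odot (add α α) (compl α) := by
      have := mv_I2 α α
      rwa [hαα, MVAlg.add_zero] at this
    have key : le (odot (add α β) (compl α)) (odot (add β β) (compl α)) :=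
      mv_odot_le_odot_left (mv_add_le_add_right hαβ β) (compl α)
    rw [hββαα, ← hI2α] at key
    exact mv_le_trans (mv_le_of_eq hI2β) key
  -- conclude
  have hsplit_t := mv_split hv13 t
  have hsplit_p := mv_split hv13 p
  have hinfv : le (infm v t) (infm v p) := by
    rw [mv_infm_eq_double_sub hv13 t, mv_infm_eq_double_sub hv13 p]
    exact mv_odot_le_odot_right (mv_compl_le_compl hβα) v
  have hinfv' : infm (compl v) t = infm (compl v) p := by
    rw [mv_infm_eq_odot hv13' t, mv_infm_eq_odot hv13' p]
    rw [mv_odot_comm (compl v) t, mv_odot_comm (compl v) p, hXt, hXp]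
  have h_t_p : le t p := by
    have h1 : le (add (infm v t) (infm (compl v) t))
        (add (infm v p) (infm (compl v) p)) := by
      rw [← hinfv']
      exact mv_add_le_add_right hinfv _
    rw [← hsplit_p] at h1
    exact mv_le_trans (mv_le_of_eq hsplit_t) h1
  exact mv_le_antisymm h_t_p h_p_t
end

section
/- Let α ∈ (0, 1/2) be irrational and M(α) := {m + nα | m, n ∈ ℤ, 0 ≤ m + nα ≤ 1}, an MV-subalgebra of the standard MV-algebra [0,1]. Then M(α) admits no square root; in particular (α+1)/2 ∉ M(α). -/
/-- The paper's `M(α)`. -/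
def mvAlgebraOfIrrational (α : ℝ) : Set ℝ :=
  {x : ℝ | ∃ m n : ℤ, x = m + n * α ∧ 0 ≤ x ∧ x ≤ 1}

theorem self_mem_mvAlgebraOfIrrational {α : ℝ} (h0 : 0 ≤ α) (h1 : α ≤ 1) :
    α ∈ mvAlgebraOfIrrational α :=
  ⟨0, 1, by push_cast; ring, h0, h1⟩

/-- `max (t + t - 1) 0` is `t ⊙ t` in the standard MV-algebra. -/
theorem eq_add_one_div_two_of_max_add_sub_one_eq {x t : ℝ} (hx : 0 < x)
    (h : max (t + t - 1) 0 = x) : t = (x + 1) / 2 := by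
  rcases le_or_gt (t + t - 1) 0 with ht | ht
  · rw [max_eq_right ht] at h
    linarith
  · rw [max_eq_left ht.le] at h
    linarith

theorem Irrational.add_one_div_two_ne_intCast_add_intCast_mul {α : ℝ} (hirr : Irrational α)
    (m n : ℤ) : (α + 1) / 2 ≠ m + n * α := by
  intro h
  have hodd : (1 - 2 * n : ℤ) ≠ 0 := by omega
  refine (hirr.mul_intCast hodd).ne_int (2 * m - 1) ?_
  push_cast
  linarith

theorem add_one_div_two_notMem_mvAlgebraOfIrrational {α : ℝ} (hirr : Irrational α) :
    (α + 1) / 2 ∉ mvAlgebraOfIrrational α := by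
  rintro ⟨m, n, h, -, -⟩
  exact hirr.add_one_div_two_ne_intCast_add_intCast_mul m n h

theorem M_alpha_no_square_root (α : ℝ) (hirr : Irrational α) (h0 : 0 < α)
    (h2 : α < 1 / 2) :
    (¬ ∃ s : ℝ → ℝ,
        (∀ x ∈ {x : ℝ | ∃ m n : ℤ, x = m + n * α ∧ 0 ≤ x ∧ x ≤ 1},
            s x ∈ {x : ℝ | ∃ m n : ℤ, x = m + n * α ∧ 0 ≤ x ∧ x ≤ 1}) ∧
        (∀ x ∈ {x : ℝ | ∃ m n : ℤ, x = m + n * α ∧ 0 ≤ x ∧ x ≤ 1},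
            max (s x + s x - 1) 0 = x) ∧
        (∀ x ∈ {x : ℝ | ∃ m n : ℤ, x = m + n * α ∧ 0 ≤ x ∧ x ≤ 1},
          ∀ y ∈ {x : ℝ | ∃ m n : ℤ, x = m + n * α ∧ 0 ≤ x ∧ x ≤ 1},
            max (y + y - 1) 0 ≤ x → y ≤ s x)) ∧
    (α + 1) / 2 ∉ {x : ℝ | ∃ m n : ℤ, x = m + n * α ∧ 0 ≤ x ∧ x ≤ 1} := by
  have hmid := add_one_div_two_notMem_mvAlgebraOfIrrational hirr
  refine ⟨?_, hmid⟩
  rintro ⟨s, hs_mem, hs_sq, -⟩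
  have hα := self_mem_mvAlgebraOfIrrational h0.le (by linarith)
  have hsα : s α = (α + 1) / 2 := eq_add_one_div_two_of_max_add_sub_one_eq h0 (hs_sq α hα)
  exact hmid (hsα ▸ hs_mem α hα)
end
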